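/- Let (φ_α)_{α>0} be a family of functions φ_α : (0,∞) × ℝ → ℝ such that for all α, κ > 0 the function φ_α(κ,·) is monotonically increasing, nonexpansive (1-Lipschitz) and satisfies φ_α(κ,0) = 0. Suppose in addition that for every κ > 0 and every y ∈ ℝ the set {(z − y)/α : z ∈ ℝ, φ_α(κ, z) = y} is the same for all α > 0. Then for every κ > 0 there exists a proper, convex, lower semicontinuous function s_κ : ℝ → [0,∞] with s_κ(0) = 0 such that φ_α(κ,·) = prox_{α·s_κ} for all α > 0. -/

import Mathlib

open scoped ENNReal
open Filter

noncomputable section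

/-- `p` is the (unique) proximal point at `x` of the `[0,∞]`-valued functional `s`. -/
def IsProxPtE (s : ℝ → ℝ≥0∞) (x p : ℝ) : Prop :=
  (∀ y : ℝ, ENNReal.ofReal ((x - p) ^ 2 / 2) + s p ≤ ENNReal.ofReal ((x - y) ^ 2 / 2) + s y) ∧
  ∀ q : ℝ, (∀ y : ℝ, ENNReal.ofReal ((x - q) ^ 2 / 2) + s q ≤
    ENNReal.ofReal ((x - y) ^ 2 / 2) + s y) → q = p

/-- Convexity for `[0,∞]`-valued functions on `ℝ`. -/
def ENNConvexOn (s : ℝ → ℝ≥0∞) : Prop :=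
  ∀ x y : ℝ, ∀ a b : ℝ, 0 ≤ a → 0 ≤ b → a + b = 1 →
    s (a * x + b * y) ≤ ENNReal.ofReal a * s x + ENNReal.ofReal b * s y

/-!
Fix `κ` and put `f = φ₁(κ,·)` and `ψ(x) = ∫₀ˣ f`. Then `ψ` is convex with `1`-Lipschitz
derivative, so `s = ψ* - ½ y²` is convex; concretely `s` is the supremum of the affine functions
`ℓ_w(y) = (w - f w) y + f(w)²/2 - ψ(w)`, and `ℓ_w` touches `s` at `f w`. Hence `w - f w` is a
subgradient of `s` at `f w`, i.e. `f w = prox_{α s}(f w + α (w - f w))`, with `α = 1` giving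
`f = prox_s`. For general `α`, comparing the sets `{(z - y)/α : φ_α(κ,z) = y}` for `α` and `1`
at `y = φ_α(κ,x)` yields `w` with `f w = φ_α(κ,x)` and `x = f w + α (w - f w)`.
-/

open intervalIntegral

section ProxOfSubgradient

variable {s : ℝ → ℝ≥0∞} {α c g p : ℝ}

lemma prox_objective_add_sq_le (hα : 0 ≤ α) (hc : 0 ≤ c) (hsp : s p = ENNReal.ofReal c)
    (hsub : ∀ y, ENNReal.ofReal (c + g * (y - p)) ≤ s y) (y : ℝ) :
    ENNReal.ofReal ((p + α * g - p) ^ 2 / 2) + ENNReal.ofReal α * s p +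
        ENNReal.ofReal ((y - p) ^ 2 / 2) ≤
      ENNReal.ofReal ((p + α * g - y) ^ 2 / 2) + ENNReal.ofReal α * s y :=
  calc ENNReal.ofReal ((p + α * g - p) ^ 2 / 2) + ENNReal.ofReal α * s p +
        ENNReal.ofReal ((y - p) ^ 2 / 2)
      = ENNReal.ofReal ((p + α * g - p) ^ 2 / 2 + α * c + (y - p) ^ 2 / 2) := by
        rw [hsp, ← ENNReal.ofReal_mul hα, ← ENNReal.ofReal_add (by positivity) (by positivity),
          ← ENNReal.ofReal_add (by positivity) (by positivity)]
    _ = ENNReal.ofReal ((p + α * g - y) ^ 2 / 2 + α * (c + g * (y - p))) := by congr 1; ring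
    _ ≤ ENNReal.ofReal ((p + α * g - y) ^ 2 / 2) + ENNReal.ofReal α *
          ENNReal.ofReal (c + g * (y - p)) := by
        rw [← ENNReal.ofReal_mul hα]; exact ENNReal.ofReal_add_le
    _ ≤ ENNReal.ofReal ((p + α * g - y) ^ 2 / 2) + ENNReal.ofReal α * s y := by
        gcongr; exact hsub y

theorem isProxPtE_of_subgradient (hα : 0 ≤ α) (hc : 0 ≤ c) (hsp : s p = ENNReal.ofReal c)
    (hsub : ∀ y, ENNReal.ofReal (c + g * (y - p)) ≤ s y) :
    IsProxPtE (fun y => ENNReal.ofReal α * s y) (p + α * g) p := by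
  refine ⟨fun y => le_self_add.trans (prox_objective_add_sq_le hα hc hsp hsub y), fun q hq => ?_⟩
  have hfin : ENNReal.ofReal ((p + α * g - p) ^ 2 / 2) + ENNReal.ofReal α * s p ≠ ⊤ := by
    rw [hsp]; finiteness
  have hsq : ENNReal.ofReal ((q - p) ^ 2 / 2) ≤ 0 := by
    refine ENNReal.le_of_add_le_add_left hfin ?_
    rw [add_zero]
    exact (prox_objective_add_sq_le hα hc hsp hsub q).trans (hq p)
  rw [nonpos_iff_eq_zero, ENNReal.ofReal_eq_zero] at hsq
  nlinarith [sq_nonneg (q - p)]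

end ProxOfSubgradient

theorem ENNConvexOn.iSup {ι : Sort*} {g : ι → ℝ → ℝ≥0∞} (hg : ∀ i, ENNConvexOn (g i)) :
    ENNConvexOn fun y => ⨆ i, g i y := by
  intro x y a b ha hb hab
  refine iSup_le fun i => (hg i x y a b ha hb hab).trans ?_
  gcongr <;> exact le_iSup (fun i => g i _) i

theorem ennConvexOn_ofReal_mul_add (m c : ℝ) : ENNConvexOn fun y => ENNReal.ofReal (m * y + c) := by
  intro x y a b ha hb hab
  calc ENNReal.ofReal (m * (a * x + b * y) + c)
      = ENNReal.ofReal (a * (m * x + c) + b * (m * y + c)) := by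
        congr 1; linear_combination c * hab.symm
    _ ≤ ENNReal.ofReal (a * (m * x + c)) + ENNReal.ofReal (b * (m * y + c)) :=
        ENNReal.ofReal_add_le
    _ = ENNReal.ofReal a * ENNReal.ofReal (m * x + c) +
          ENNReal.ofReal b * ENNReal.ofReal (m * y + c) := by
        rw [ENNReal.ofReal_mul ha, ENNReal.ofReal_mul hb]

section Potential

variable {f : ℝ → ℝ}

def potential (f : ℝ → ℝ) (x : ℝ) : ℝ := ∫ t in (0 : ℝ)..x, f t

@[simp] lemma potential_zero : potential f 0 = 0 := integral_same

lemma potential_sub_sub_eq (hf : Continuous f) (x y : ℝ) :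
    potential f y - potential f x - f x * (y - x) =
      ∫ θ in (0 : ℝ)..1, (f (x + (y - x) * θ) - f x) * (y - x) := by
  have hcomp : Continuous fun θ => f (x + (y - x) * θ) := by fun_prop
  have hsub : potential f y - potential f x = (y - x) * ∫ θ in (0 : ℝ)..1, f (x + (y - x) * θ) := by
    rw [potential, potential, integral_interval_sub_left (hf.intervalIntegrable _ _)
      (hf.intervalIntegrable _ _), ← smul_eq_mul, smul_integral_comp_add_mul]
    simp
  rw [hsub, integral_mul_const, integral_sub (hcomp.intervalIntegrable _ _)
    intervalIntegrable_const, integral_const]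
  simp only [sub_zero, smul_eq_mul, one_mul]
  ring

lemma mul_sub_le_potential_sub (hf : Continuous f) (hm : Monotone f) (x y : ℝ) :
    f x * (y - x) ≤ potential f y - potential f x := by
  have hint : 0 ≤ ∫ θ in (0 : ℝ)..1, (f (x + (y - x) * θ) - f x) * (y - x) := by
    refine integral_nonneg zero_le_one fun θ hθ => ?_
    rcases le_total x y with hxy | hyx
    · exact mul_nonneg (sub_nonneg.2 (hm (by nlinarith [hθ.1]))) (sub_nonneg.2 hxy)
    · exact mul_nonneg_of_nonpos_of_nonpos (sub_nonpos.2 (hm (by nlinarith [hθ.1])))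
        (sub_nonpos.2 hyx)
  linarith [potential_sub_sub_eq hf x y]

lemma potential_sub_le (hf : LipschitzWith 1 f) (x y : ℝ) :
    potential f y - potential f x ≤ f x * (y - x) + (y - x) ^ 2 / 2 := by
  have hint : ∫ θ in (0 : ℝ)..1, (f (x + (y - x) * θ) - f x) * (y - x) ≤
      ∫ θ in (0 : ℝ)..1, θ * (y - x) ^ 2 := by
    have hfc := hf.continuous
    refine integral_mono_on zero_le_one (Continuous.intervalIntegrable (by fun_prop) _ _)
      (Continuous.intervalIntegrable (by fun_prop) _ _) fun θ hθ => ?_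
    have hlip : |f (x + (y - x) * θ) - f x| ≤ |(y - x) * θ| := by
      simpa [Real.dist_eq] using hf.dist_le_mul (x + (y - x) * θ) x
    calc (f (x + (y - x) * θ) - f x) * (y - x)
        ≤ |f (x + (y - x) * θ) - f x| * |y - x| := by rw [← abs_mul]; exact le_abs_self _
      _ ≤ |(y - x) * θ| * |y - x| := by gcongr
      _ = θ * (y - x) ^ 2 := by rw [abs_mul, abs_of_nonneg hθ.1, ← sq_abs (y - x)]; ring
  have hquad : ∫ θ in (0 : ℝ)..1, θ * (y - x) ^ 2 = (y - x) ^ 2 / 2 := by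
    rw [integral_mul_const, integral_id]; ring
  linarith [potential_sub_sub_eq hf.continuous x y]

end Potential

section ProxPenalty

variable {f : ℝ → ℝ}

def proxPenaltyTangent (f : ℝ → ℝ) (w y : ℝ) : ℝ := (w - f w) * y + (f w ^ 2 / 2 - potential f w)

def proxPenalty (f : ℝ → ℝ) (y : ℝ) : ℝ≥0∞ := ⨆ w, ENNReal.ofReal (proxPenaltyTangent f w y)

lemma proxPenaltyTangent_zero_left (h0 : f 0 = 0) (y : ℝ) : proxPenaltyTangent f 0 y = 0 := by
  simp [proxPenaltyTangent, h0]

/-- Co-coercivity of the gradient `f` of the convex, `1`-smooth function `potential f`. -/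
lemma proxPenaltyTangent_le (hf : LipschitzWith 1 f) (hm : Monotone f) (w z : ℝ) :
    proxPenaltyTangent f w (f z) ≤ proxPenaltyTangent f z (f z) := by
  have hconv := mul_sub_le_potential_sub hf.continuous hm z (w + f z - f w)
  have hsmooth := potential_sub_le hf w (w + f z - f w)
  simp only [proxPenaltyTangent]
  nlinarith

lemma proxPenalty_apply_image (hf : LipschitzWith 1 f) (hm : Monotone f) (z : ℝ) :
    proxPenalty f (f z) = ENNReal.ofReal (proxPenaltyTangent f z (f z)) :=
  le_antisymm (iSup_le fun w => ENNReal.ofReal_le_ofReal (proxPenaltyTangent_le hf hm w z))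
    (le_iSup (fun w => ENNReal.ofReal (proxPenaltyTangent f w (f z))) z)

lemma proxPenalty_zero (hf : LipschitzWith 1 f) (hm : Monotone f) (h0 : f 0 = 0) :
    proxPenalty f 0 = 0 := by
  have h := proxPenalty_apply_image hf hm 0
  rwa [proxPenaltyTangent_zero_left h0, ENNReal.ofReal_zero, h0] at h

lemma ennConvexOn_proxPenalty : ENNConvexOn (proxPenalty f) :=
  ENNConvexOn.iSup fun w => ennConvexOn_ofReal_mul_add (w - f w) _

lemma lowerSemicontinuous_proxPenalty : LowerSemicontinuous (proxPenalty f) :=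
  lowerSemicontinuous_iSup fun w =>
    (ENNReal.continuous_ofReal.comp (by unfold proxPenaltyTangent; fun_prop)).lowerSemicontinuous

theorem isProxPtE_proxPenalty (hf : LipschitzWith 1 f) (hm : Monotone f) (h0 : f 0 = 0)
    {α : ℝ} (hα : 0 ≤ α) (z : ℝ) :
    IsProxPtE (fun y => ENNReal.ofReal α * proxPenalty f y) (f z + α * (z - f z)) (f z) := by
  refine isProxPtE_of_subgradient hα ?_ (proxPenalty_apply_image hf hm z) fun y => ?_
  · simpa [proxPenaltyTangent_zero_left h0] using proxPenaltyTangent_le hf hm 0 z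
  · have htangent : proxPenaltyTangent f z (f z) + (z - f z) * (y - f z) =
        proxPenaltyTangent f z y := by
      simp only [proxPenaltyTangent]; ring
    rw [htangent]
    exact le_iSup (fun w => ENNReal.ofReal (proxPenaltyTangent f w y)) z

end ProxPenalty

theorem statement19 (φ : ℝ → ℝ → ℝ → ℝ)
    (hmono : ∀ α > (0 : ℝ), ∀ κ > (0 : ℝ), Monotone (φ α κ))
    (hnonexp : ∀ α > (0 : ℝ), ∀ κ > (0 : ℝ), ∀ x y : ℝ, |φ α κ x - φ α κ y| ≤ |x - y|)
    (hzero : ∀ α > (0 : ℝ), ∀ κ > (0 : ℝ), φ α κ 0 = 0)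
    (hstat : ∀ κ > (0 : ℝ), ∀ y : ℝ, ∀ α β : ℝ, 0 < α → 0 < β →
      {w : ℝ | ∃ z : ℝ, φ α κ z = y ∧ w = (z - y) / α} =
      {w : ℝ | ∃ z : ℝ, φ β κ z = y ∧ w = (z - y) / β}) :
    ∀ κ > (0 : ℝ), ∃ s : ℝ → ℝ≥0∞, (∃ x, s x ≠ ⊤) ∧ ENNConvexOn s ∧
      LowerSemicontinuous s ∧ s 0 = 0 ∧
      ∀ α > (0 : ℝ), ∀ x : ℝ, IsProxPtE (fun y => ENNReal.ofReal α * s y) x (φ α κ x) := by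
  intro κ hκ
  set f := φ 1 κ
  have hf : LipschitzWith 1 f := LipschitzWith.of_dist_le_mul fun u v => by
    simpa [Real.dist_eq] using hnonexp 1 one_pos κ hκ u v
  have hm : Monotone f := hmono 1 one_pos κ hκ
  have h0 : f 0 = 0 := hzero 1 one_pos κ hκ
  refine ⟨proxPenalty f, ⟨0, by simp [proxPenalty_zero hf hm h0]⟩, ennConvexOn_proxPenalty,
    lowerSemicontinuous_proxPenalty, proxPenalty_zero hf hm h0, fun α hα x => ?_⟩
  have hmem : (x - φ α κ x) / α ∈ {w : ℝ | ∃ z, φ α κ z = φ α κ x ∧ w = (z - φ α κ x) / α} :=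
    ⟨x, rfl, rfl⟩
  rw [hstat κ hκ _ α 1 hα one_pos] at hmem
  obtain ⟨z, hz : f z = φ α κ x, hxz⟩ := hmem
  have hx : f z + α * (z - f z) = x := by
    rw [hz]; field_simp at hxz; linarith
  have hprox := isProxPtE_proxPenalty hf hm h0 hα.le z
  rwa [hx, hz] at hprox
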